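/- arXiv:2010.06795 — 3 statements merged into one kernel-verified Lean document; each statement's English description precedes it below -/
import Mathlib

section
/- Define f : N⁶ → Z⁴ on the free commutative monoid N⁶ by sending the generators to R₁ = (0,1,1,0), R₂ = (1,0,0,2), R₃ = (1,0,2,0), R₄ = (1,2,0,4), R₅ = (1,0,1,1), R₆ = (1,1,0,3). Let V = {e₂+e₃−2e₅, e₂+e₄−2e₆, e₁+2e₂−e₅−e₆, e₁+e₂+e₅−e₃−e₆, e₁+e₂+e₆−e₄−e₅, e₁+e₅+e₆−e₃−e₄} ⊂ Z⁶. Declare x ~ y for x, y ∈ N⁶ if y − x ∈ V or x − y ∈ V (viewing N⁶ ⊂ Z⁶). Then for x, y ∈ N⁶, f(x) = f(y) if and only if x and y are connected by a finite chain of ~-moves that stays entirely inside N⁶. -/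
/-- The intersection profiles `(H·Rᵢ, E₀·Rᵢ, E_∞·Rᵢ, E·Rᵢ)` of the six generators
of the monoid of integral nef curve classes. -/
def R : Fin 6 → (Fin 4 → ℤ)
  | 0 => ![0, 1, 1, 0]
  | 1 => ![1, 0, 0, 2]
  | 2 => ![1, 0, 2, 0]
  | 3 => ![1, 2, 0, 4]
  | 4 => ![1, 0, 1, 1]
  | 5 => ![1, 1, 0, 3]

/-- The standard basis vectors of `ℤ⁶`. -/
def e (i : Fin 6) : Fin 6 → ℤ := Pi.single i 1

/-- The six relation vectors in `ℤ⁶`. -/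
def V : Set (Fin 6 → ℤ) :=
  {e 1 + e 2 - 2 • e 4, e 1 + e 3 - 2 • e 5, e 0 + 2 • e 1 - e 4 - e 5,
   e 0 + e 1 + e 4 - e 2 - e 5, e 0 + e 1 + e 5 - e 3 - e 4,
   e 0 + e 4 + e 5 - e 2 - e 3}

/-- The inclusion `ℕ⁶ ⊆ ℤ⁶`. -/
def intVec (x : Fin 6 → ℕ) : Fin 6 → ℤ := fun i => (x i : ℤ)

/-- One elementary move: replace `x` by `y` where the difference (in `ℤ⁶`) is one
of the six relation vectors, in either direction; both `x` and `y` lie in `ℕ⁶`. -/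
def step (x y : Fin 6 → ℕ) : Prop := intVec y - intVec x ∈ V ∨ intVec x - intVec y ∈ V

/-!
Every relation vector lies in the kernel of `v ↦ ∑ vᵢ Rᵢ`, so moves preserve the class.
Conversely, writing `aₖ` for the coefficient of `Rₖ` (in the code `x i` is the coefficient of
`R_{i+1}`), a point outside the normal form `IsNormal` always admits a move lowering the weight
`a₁ + 2 a₃ + 4 a₄`: `R₄` is removed by `R₂ + R₄ = 2 R₆`, `R₃ + R₄ = R₁ + R₅ + R₆` or
`R₄ + R₅ = R₁ + R₂ + R₆`, then `R₃` by `R₂ + R₃ = 2 R₅` or `R₃ + R₆ = R₁ + R₂ + R₅`, and finally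
`R₁ + 2 R₂` by `R₅ + R₆`. On normal forms the class determines all coefficients, so two points
with the same class reach the same normal form.
-/

open Relation

theorem Relation.exists_reflTransGen_of_measure_lt {α : Type*} {r : α → α → Prop}
    {P : α → Prop} (μ : α → ℕ) (h : ∀ x, ¬ P x → ∃ y, r x y ∧ μ y < μ x) (x : α) :
    ∃ y, ReflTransGen r x y ∧ P y := by
  induction x using (measure μ).wf.induction with
  | h x ih =>
    by_cases hx : P x
    · exact ⟨x, .refl, hx⟩
    obtain ⟨y, hxy, hμ⟩ := h x hx
    obtain ⟨z, hyz, hz⟩ := ih y hμ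
    exact ⟨z, .head hxy hyz, hz⟩

theorem Relation.ReflTransGen.apply_eq {α β : Type*} {r : α → α → Prop} {f : α → β}
    (hf : ∀ a b, r a b → f a = f b) {a b : α} (h : ReflTransGen r a b) : f a = f b := by
  simpa only [reflTransGen_eq_self] using ReflTransGen.lift f hf a b h

def curveClass (x : Fin 6 → ℕ) : Fin 4 → ℤ := ∑ i, (x i : ℤ) • R i

lemma curveClass_sub_curveClass (x y : Fin 6 → ℕ) :
    curveClass y - curveClass x = ∑ i, (intVec y - intVec x) i • R i := by
  simp only [curveClass, ← Finset.sum_sub_distrib, Pi.sub_apply, sub_smul, intVec]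

lemma sum_smul_R_eq_zero_of_mem_V {v : Fin 6 → ℤ} (hv : v ∈ V) : ∑ i, v i • R i = 0 := by
  simp only [V, Set.mem_insert_iff, Set.mem_singleton_iff] at hv
  rcases hv with rfl | rfl | rfl | rfl | rfl | rfl <;> funext j <;> fin_cases j <;>
    simp [Fin.sum_univ_six, e, R, Pi.single_apply]

instance : Std.Symm step := ⟨fun _ _ h => h.symm⟩

lemma curveClass_eq_of_sub_mem_V {x y : Fin 6 → ℕ} (h : intVec y - intVec x ∈ V) :
    curveClass x = curveClass y := by
  rw [eq_comm, ← sub_eq_zero, curveClass_sub_curveClass, sum_smul_R_eq_zero_of_mem_V h]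

lemma curveClass_eq_of_step {x y : Fin 6 → ℕ} (h : step x y) : curveClass x = curveClass y :=
  h.elim curveClass_eq_of_sub_mem_V fun h => (curveClass_eq_of_sub_mem_V h).symm

lemma curveClass_eq_of_reflTransGen {x y : Fin 6 → ℕ} (h : ReflTransGen step x y) :
    curveClass x = curveClass y :=
  h.apply_eq fun _ _ hs => curveClass_eq_of_step hs

lemma step_of_add {x y : Fin 6 → ℕ} {v : Fin 6 → ℤ} (hv : v ∈ V)
    (h : ∀ i, (y i : ℤ) = x i + v i) : step x y :=
  Or.inl (by convert hv using 1; funext i; simp [intVec, h])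

lemma step_of_sub {x y : Fin 6 → ℕ} {v : Fin 6 → ℤ} (hv : v ∈ V)
    (h : ∀ i, (y i : ℤ) = x i - v i) : step x y :=
  Or.inr (by convert hv using 1; funext i; simp [intVec, h])

def IsNormal (x : Fin 6 → ℕ) : Prop :=
  (x 3 = 0 ∨ x 1 = 0 ∧ x 2 = 0 ∧ x 4 = 0) ∧ (x 2 = 0 ∨ x 1 = 0 ∧ x 5 = 0) ∧ (x 0 = 0 ∨ x 1 ≤ 1)

def reductionWeight (x : Fin 6 → ℕ) : ℕ := x 0 + 2 * x 2 + 4 * x 3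

lemma exists_step_reductionWeight_lt {x : Fin 6 → ℕ} (hx : ¬ IsNormal x) :
    ∃ y, step x y ∧ reductionWeight y < reductionWeight x := by
  simp only [IsNormal, not_and_or, not_or] at hx
  rcases hx with ⟨h3, h1 | h2 | h4⟩ | ⟨h2, h1 | h5⟩ | ⟨h0, h1⟩ <;>
  [refine ⟨![x 0, x 1 - 1, x 2, x 3 - 1, x 4, x 5 + 2],
      step_of_sub (v := e 1 + e 3 - 2 • e 5) (by simp only [V]; tauto) ?_, ?_⟩;
    refine ⟨![x 0 + 1, x 1, x 2 - 1, x 3 - 1, x 4 + 1, x 5 + 1],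
      step_of_add (v := e 0 + e 4 + e 5 - e 2 - e 3) (by simp only [V]; tauto) ?_, ?_⟩;
    refine ⟨![x 0 + 1, x 1 + 1, x 2, x 3 - 1, x 4 - 1, x 5 + 1],
      step_of_add (v := e 0 + e 1 + e 5 - e 3 - e 4) (by simp only [V]; tauto) ?_, ?_⟩;
    refine ⟨![x 0, x 1 - 1, x 2 - 1, x 3, x 4 + 2, x 5],
      step_of_sub (v := e 1 + e 2 - 2 • e 4) (by simp only [V]; tauto) ?_, ?_⟩;
    refine ⟨![x 0 + 1, x 1 + 1, x 2 - 1, x 3, x 4 + 1, x 5 - 1],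
      step_of_add (v := e 0 + e 1 + e 4 - e 2 - e 5) (by simp only [V]; tauto) ?_, ?_⟩;
    refine ⟨![x 0 - 1, x 1 - 2, x 2, x 3, x 4 + 1, x 5 + 1],
      step_of_sub (v := e 0 + 2 • e 1 - e 4 - e 5) (by simp only [V]; tauto) ?_, ?_⟩]
  all_goals first
    | intro i
      fin_cases i <;>
        simp only [e, Pi.add_apply, Pi.sub_apply, Pi.single_apply, nsmul_eq_mul, Nat.cast_ofNat,
          Pi.mul_apply, Pi.ofNat_apply, Matrix.cons_val, Fin.reduceFinMk, Fin.isValue, Fin.zero_eta,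
          Fin.mk_one, Fin.reduceEq, ↓reduceIte] <;> omega
    | simp only [reductionWeight, Matrix.cons_val_zero, Matrix.cons_val, Fin.isValue]; omega

lemma exists_reflTransGen_isNormal (x : Fin 6 → ℕ) : ∃ y, ReflTransGen step x y ∧ IsNormal y :=
  exists_reflTransGen_of_measure_lt reductionWeight (fun _ => exists_step_reductionWeight_lt) x

lemma curveClass_eq_vecCons (x : Fin 6 → ℕ) :
    curveClass x = ![(x 1 + x 2 + x 3 + x 4 + x 5 : ℤ), x 0 + 2 * x 3 + x 5, x 0 + 2 * x 2 + x 4,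
      2 * x 1 + 4 * x 3 + x 4 + 3 * x 5] := by
  funext j
  fin_cases j <;>
    simp only [curveClass, R, Finset.sum_apply, Pi.smul_apply, smul_eq_mul, Fin.sum_univ_six,
      Matrix.cons_val_zero, Matrix.cons_val_one, Matrix.cons_val, Fin.zero_eta, Fin.mk_one,
      Fin.reduceFinMk, Fin.isValue] <;> ring

lemma IsNormal.eq_of_curveClass_eq {s t : Fin 6 → ℕ} (hs : IsNormal s) (ht : IsNormal t)
    (h : curveClass s = curveClass t) : s = t := by
  simp only [curveClass_eq_vecCons, Matrix.vecCons_inj] at h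
  unfold IsNormal at hs ht
  funext i
  fin_cases i <;> simp only [Fin.zero_eta, Fin.mk_one, Fin.reduceFinMk, Fin.isValue] <;> omega

/-- Two formal nonnegative sums of the generators `R₁, …, R₆` have the same image
in `ℤ⁴` iff they are connected by a finite chain of relation moves staying in `ℕ⁶`. -/
theorem stmt_8 (x y : Fin 6 → ℕ) :
    (∑ i : Fin 6, (x i : ℤ) • R i) = (∑ i : Fin 6, (y i : ℤ) • R i) ↔
      Relation.ReflTransGen step x y := by
  refine ⟨fun hxy => ?_, curveClass_eq_of_reflTransGen⟩
  obtain ⟨s, hxs, hs⟩ := exists_reflTransGen_isNormal x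
  obtain ⟨t, hyt, ht⟩ := exists_reflTransGen_isNormal y
  obtain rfl : s = t := hs.eq_of_curveClass_eq ht <|
    (curveClass_eq_of_reflTransGen hxs).symm.trans (hxy.trans (curveClass_eq_of_reflTransGen hyt))
  exact hxs.trans (symm hyt)
end

section
/- Let R₁ = (0,1,1,0), R₂ = (1,0,0,2), R₃ = (1,0,2,0), R₄ = (1,2,0,4), R₅ = (1,0,1,1), R₆ = (1,1,0,3) in Z⁴. Every vector v = (h, e₀, e_∞, e) ∈ Z⁴ satisfying h ≥ 0, e₀ ≥ 0, e_∞ ≥ 0, e ≥ 0, 4h − e ≥ 0, and −2h − e₀ + e_∞ + e = 0 is a nonnegative integral linear combination of R₁, …, R₆. -/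
lemma eq_sum_smul_R_iff (v : Fin 4 → ℤ) (c : Fin 6 → ℕ) :
    v = ∑ i, (c i : ℤ) • R i ↔
      v 0 = c 1 + c 2 + c 3 + c 4 + c 5 ∧ v 1 = c 0 + 2 * c 3 + c 5 ∧
      v 2 = c 0 + 2 * c 2 + c 4 ∧ v 3 = 2 * c 1 + 4 * c 3 + c 4 + 3 * c 5 := by
  simp [funext_iff, Fin.forall_fin_succ, Fin.sum_univ_six, R, mul_comm]

theorem stmt_9_general (v : Fin 4 → ℤ)
    (h1 : 0 ≤ v 1) (h2 : 0 ≤ v 2) (h3 : 0 ≤ v 3)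
    (h4 : 0 ≤ 4 * v 0 - v 3)
    (h5 : -2 * v 0 - v 1 + v 2 + v 3 = 0) :
    ∃ c : Fin 6 → ℕ, v = ∑ i : Fin 6, (c i : ℤ) • R i := by
  set k := v 3 / 2
  set r := v 3 % 2
  rcases le_or_gt (v 3) (2 * v 0) with hle | hgt
  · refine ⟨![(v 1).toNat, k.toNat, (v 0 - k - r).toNat, 0, r.toNat, 0], ?_⟩
    simp only [eq_sum_smul_R_iff, Matrix.cons_val, Int.ofNat_toNat, Nat.cast_zero]
    omega
  · refine ⟨![(v 2).toNat, (2 * v 0 - k - r).toNat, 0, (k - v 0).toNat, 0, r.toNat], ?_⟩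
    simp only [eq_sum_smul_R_iff, Matrix.cons_val, Int.ofNat_toNat, Nat.cast_zero]
    omega

/-- Every integral vector `(h, e₀, e_∞, e)` with `h, e₀, e_∞, e ≥ 0`, `4h - e ≥ 0`
and `-2h - e₀ + e_∞ + e = 0` is a nonnegative integral combination of `R₁, …, R₆`. -/
theorem stmt_9 (v : Fin 4 → ℤ)
    (h0 : 0 ≤ v 0) (h1 : 0 ≤ v 1) (h2 : 0 ≤ v 2) (h3 : 0 ≤ v 3)
    (h4 : 0 ≤ 4 * v 0 - v 3)
    (h5 : -2 * v 0 - v 1 + v 2 + v 3 = 0) :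
    ∃ c : Fin 6 → ℕ, v = ∑ i : Fin 6, (c i : ℤ) • R i :=
  stmt_9_general v h1 h2 h3 h4 h5
end

section
/- Let f : Z⁶ → Z⁴ be the group homomorphism sending the standard basis to R₁ = (0,1,1,0), R₂ = (1,0,0,2), R₃ = (1,0,2,0), R₄ = (1,2,0,4), R₅ = (1,0,1,1), R₆ = (1,1,0,3). Then the image of f equals the sublattice L = {(h, e₀, e_∞, e) ∈ Z⁴ : −2h − e₀ + e_∞ + e = 0}. -/
/-- The numerical relation `2H + E₀ ≡ E_∞ + E`, read on intersection profiles. -/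
def numericalRelation : (Fin 4 → ℤ) →ₗ[ℤ] ℤ :=
  -2 • LinearMap.proj (R := ℤ) (φ := fun _ : Fin 4 => ℤ) 0 - LinearMap.proj 1 + LinearMap.proj 2
    + LinearMap.proj 3

@[simp]
lemma numericalRelation_apply (v : Fin 4 → ℤ) :
    numericalRelation v = -2 * v 0 - v 1 + v 2 + v 3 := by
  simp [numericalRelation]

lemma numericalRelation_R (i : Fin 6) : numericalRelation (R i) = 0 := by
  fin_cases i <;> simp [R]

lemma numericalRelation_sum_smul_R (x : Fin 6 → ℤ) :
    numericalRelation (∑ i, x i • R i) = 0 := by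
  simp only [map_sum, map_zsmul, numericalRelation_R, smul_zero, Finset.sum_const_zero]

/-- `R₁, R₃, R₅` (`R 0`, `R 2`, `R 4`) already form a basis of the kernel: in the coordinates
`(h, e₀, e)` they are `(0, 1, 0)`, `(1, 0, 0)`, `(1, 0, 1)`. -/
lemma exists_sum_smul_R_eq {v : Fin 4 → ℤ} (hv : numericalRelation v = 0) :
    ∃ x : Fin 6 → ℤ, ∑ i, x i • R i = v := by
  rw [numericalRelation_apply] at hv
  refine ⟨![v 1, 0, v 0 - v 3, 0, v 3, 0], funext fun j => ?_⟩
  fin_cases j <;> simp [Fin.sum_univ_six, R]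
  linarith

/-- The image of the homomorphism `ℤ⁶ → ℤ⁴` sending the standard basis to
`R₁, …, R₆` is the sublattice `{(h, e₀, e_∞, e) : -2h - e₀ + e_∞ + e = 0}`. -/
theorem stmt_11 :
    {v : Fin 4 → ℤ | ∃ x : Fin 6 → ℤ, v = ∑ i : Fin 6, x i • R i} =
      {v : Fin 4 → ℤ | -2 * v 0 - v 1 + v 2 + v 3 = 0} := by
  ext v
  constructor
  · rintro ⟨x, rfl⟩
    exact (numericalRelation_apply _).symm.trans (numericalRelation_sum_smul_R x)
  · intro hv
    obtain ⟨x, hx⟩ := exists_sum_smul_R_eq ((numericalRelation_apply v).trans hv)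
    exact ⟨x, hx.symm⟩
end
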